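/- arXiv:1102.1169 — 2 statements merged into one kernel-verified Lean document; each statement's English description precedes it below -/
import Mathlib

section
/- Let G be a finite simple graph and r₁, …, r_k nonnegative integers with ∑ᵢ rᵢ ≥ Δ(G) + 1 − k. Then V(G) can be partitioned into sets V₁, …, V_k such that the induced subgraph G[Vᵢ] has maximum degree at most rᵢ for each i (Lovász's decomposition lemma). -/
/-!
Colour `V` by `α` and let `d_c(v, x)` be the number of neighbours of `v` of colour `x`. A colouring
minimising `Φ(c) = ∑ᵥ (d_c(v, c v) - 2 r (c v))` works: if `d_c(v, c v) > r (c v)` for some `v`,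
then since `∑ₓ d_c(v, x) = deg v ≤ Δ < ∑ₓ (r x + 1)` some colour `j` has `d_c(v, j) ≤ r j`, and
recolouring `v` with `j` changes `Φ` by `2 ((d_c(v, j) - r j) - (d_c(v, c v) - r (c v))) < 0`.
-/

open Finset

namespace SimpleGraph

variable {V α : Type*} [Fintype V] (G : SimpleGraph V) [DecidableRel G.Adj] [DecidableEq α]

def colorDegree (c : V → α) (v : V) (x : α) : ℕ := #{w | G.Adj v w ∧ c w = x}

theorem sum_colorDegree [Fintype α] (c : V → α) (v : V) :
    ∑ x, G.colorDegree c v x = G.degree v := by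
  rw [← card_neighborFinset_eq_degree, neighborFinset_eq_filter,
    card_eq_sum_card_fiberwise (f := c) (t := univ) fun _ _ => mem_univ _]
  simp only [colorDegree, filter_filter]

theorem exists_colorDegree_le [Fintype α] (c : V → α) (v : V) (r : α → ℕ)
    (hsum : G.degree v + 1 ≤ ∑ x, r x + Fintype.card α) :
    ∃ x, G.colorDegree c v x ≤ r x := by
  by_contra! h
  have : ∑ x, (r x + 1) ≤ ∑ x, G.colorDegree c v x := sum_le_sum fun x _ => h x
  rw [sum_colorDegree, sum_add_distrib, sum_const, card_univ, smul_eq_mul, mul_one] at this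
  omega

theorem sum_ite_adj_eq_colorDegree (c : V → α) (v : V) (x : α) :
    ∑ u, (if G.Adj u v ∧ c u = x then 1 else 0 : ℤ) = G.colorDegree c v x := by
  simp only [sum_boole, colorDegree, G.adj_comm]

theorem colorDegree_update [DecidableEq V] (c : V → α) (v u : V) (j x : α) :
    (G.colorDegree (Function.update c v j) u x : ℤ) =
      G.colorDegree c u x + (if G.Adj u v ∧ j = x then 1 else 0)
        - (if G.Adj u v ∧ c v = x then 1 else 0) := by
  simp only [colorDegree, card_filter, Nat.cast_sum, Nat.cast_ite, Nat.cast_one, Nat.cast_zero]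
  rw [add_sub_assoc, ← sub_eq_iff_eq_add', ← sum_sub_distrib,
    sum_eq_single v (fun w _ hw => by simp [Function.update_of_ne hw]) (by simp)]
  simp

def colorPotential (r : α → ℕ) (c : V → α) : ℤ :=
  ∑ v, ((G.colorDegree c v (c v) : ℤ) - 2 * r (c v))

theorem colorPotential_update [DecidableEq V] (r : α → ℕ) (c : V → α) (v : V) (j : α) :
    G.colorPotential r (Function.update c v j) = G.colorPotential r c
      + 2 * (((G.colorDegree c v j : ℤ) - r j) - ((G.colorDegree c v (c v) : ℤ) - r (c v))) := by
  have hterm : ∀ u, ((G.colorDegree (Function.update c v j) u (Function.update c v j u) : ℤ)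
      - 2 * r (Function.update c v j u)) - ((G.colorDegree c u (c u) : ℤ) - 2 * r (c u)) =
      ((if G.Adj u v ∧ c u = j then 1 else 0) - (if G.Adj u v ∧ c u = c v then 1 else 0))
        + if u = v then ((G.colorDegree c v j : ℤ) - 2 * r j)
            - ((G.colorDegree c v (c v) : ℤ) - 2 * r (c v)) else 0 := by
    intro u
    rcases eq_or_ne u v with rfl | huv
    · simp [colorDegree_update]
    · simp only [Function.update_of_ne huv, colorDegree_update, if_neg huv, eq_comm (a := c u)]
      ring
  rw [colorPotential, colorPotential, ← sub_eq_iff_eq_add', ← sum_sub_distrib, sum_congr rfl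
    fun u _ => hterm u, sum_add_distrib, sum_sub_distrib, sum_ite_adj_eq_colorDegree,
    sum_ite_adj_eq_colorDegree, sum_ite_eq']
  simp only [mem_univ, if_true]
  ring

theorem exists_coloring_colorDegree_le [Fintype α] (r : α → ℕ)
    (hsum : G.maxDegree + 1 ≤ ∑ x, r x + Fintype.card α) :
    ∃ c : V → α, ∀ v, G.colorDegree c v (c v) ≤ r (c v) := by
  classical
  have : Nonempty α := by
    by_contra!
    simp at hsum
  obtain ⟨c, hmin⟩ := Finite.exists_min (G.colorPotential r)
  refine ⟨c, fun v => ?_⟩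
  by_contra! hv
  obtain ⟨j, hj⟩ :=
    G.exists_colorDegree_le c v r ((Nat.add_le_add_right (G.degree_le_maxDegree v) 1).trans hsum)
  have := hmin (Function.update c v j)
  rw [colorPotential_update] at this
  omega

theorem ncard_neighborSet_induce_fiber (c : V → α) (i : α) (v : {v // c v = i}) :
    ((G.induce {v | c v = i}).neighborSet v).ncard = G.colorDegree c v i := by
  rw [neighborSet_induce, colorDegree, ← Set.ncard_coe_finset]
  show {w : {v // c v = i} | (w : V) ∈ G.neighborSet v}.ncard = _
  rw [Set.ncard_subtype]
  congr 1
  ext w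
  simp

end SimpleGraph

/-- **Lovász's decomposition lemma.** If `∑ rᵢ ≥ Δ(G) + 1 - k` then `V(G)` can be
partitioned into sets `V₁, …, V_k` with `Δ(G[Vᵢ]) ≤ rᵢ` for each `i`. -/
theorem lovasz_decomposition {V : Type*} [Fintype V] (G : SimpleGraph V)
    [DecidableRel G.Adj] (k : ℕ) (r : Fin k → ℕ)
    (hsum : G.maxDegree + 1 ≤ (∑ i, r i) + k) :
    ∃ c : V → Fin k, ∀ i : Fin k,
      ∀ v : {v : V // c v = i},
        ((G.induce {v : V | c v = i}).neighborSet v).ncard ≤ r i := by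
  obtain ⟨c, hc⟩ := G.exists_coloring_colorDegree_le r (by rwa [Fintype.card_fin])
  refine ⟨c, fun i v => ?_⟩
  rw [G.ncard_neighborSet_induce_fiber]
  simpa [v.2] using hc v
end

section
/- Every connected non-complete r-regular finite simple graph G (with r ≥ 2) contains, for every vertex x, a vertex y not adjacent to x and distinct from x such that G − y is connected. -/
/-!
A vertex `y` at maximal distance from `x` is never a cut vertex: a shortest walk from `x` to any
other vertex `v` cannot pass through `y`, since everything before its endpoint is strictly closer
to `x` than `v`, hence than `y`. In a regular non-complete graph no vertex is universal, so some
vertex lies at distance at least `2` from `x`, and then so does `y`.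
-/

open SimpleGraph

namespace SimpleGraph

variable {V : Type*} {G : SimpleGraph V}

lemma IsRegularOfDegree.not_isUniversal_of_ne_top [Fintype V] [DecidableRel G.Adj] {r : ℕ}
    (hreg : G.IsRegularOfDegree r) (hG : G ≠ ⊤) (x : V) : ¬ G.IsUniversal x := by
  intro hx
  refine hG (eq_top_iff.2 fun a b hab ↦ ?_)
  have ha : G.IsUniversal a := by
    rw [← degree_eq_card_sub_one, hreg a, ← hreg x, degree_eq_card_sub_one]
    exact hx
  exact ha hab

lemma Walk.dist_lt_of_length_eq_dist {u v w : V} {p : G.Walk u v} (hp : p.length = G.dist u v)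
    (hw : w ∈ p.support) (hwv : w ≠ v) : G.dist u w < G.dist u v := by
  classical
  have htake : (p.takeUntil w hw).length = G.dist u w :=
    length_eq_dist_of_subwalk hp (p.isSubwalk_takeUntil hw)
  have hdrop : (p.dropUntil w hw).length ≠ 0 := fun h ↦ hwv (Walk.eq_of_length_eq_zero h)
  have hsplit := congrArg Walk.length (p.take_spec hw)
  rw [Walk.length_append] at hsplit
  omega

lemma Connected.induce_compl_singleton_of_forall_dist_le (hconn : G.Connected) {x y : V}
    (hyx : y ≠ x) (hy : ∀ v, G.dist x v ≤ G.dist x y) : (G.induce {y}ᶜ).Connected := by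
  rw [connected_iff_exists_forall_reachable]
  refine ⟨⟨x, hyx.symm⟩, fun ⟨v, hv⟩ ↦ ?_⟩
  obtain ⟨p, hp⟩ := hconn.exists_walk_length_eq_dist x v
  have hyp : y ∉ p.support := fun hmem ↦
    (Walk.dist_lt_of_length_eq_dist hp hmem (Ne.symm hv)).not_ge (hy v)
  exact ⟨p.induce {y}ᶜ fun w hw hwy ↦ hyp (hwy ▸ hw)⟩

end SimpleGraph

theorem exists_nonadjacent_noncut_general {V : Type*} [Fintype V] (G : SimpleGraph V)
    (r : ℕ) [DecidableRel G.Adj]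
    (hconn : G.Connected) (hnc : G ≠ ⊤) (hreg : G.IsRegularOfDegree r) (x : V) :
    ∃ y : V, y ≠ x ∧ ¬ G.Adj x y ∧ (G.induce {v : V | v ≠ y}).Connected := by
  obtain ⟨z, hxz, hnadj⟩ : ∃ z, x ≠ z ∧ ¬ G.Adj x z := by
    simpa [IsUniversal] using hreg.not_isUniversal_of_ne_top hnc x
  obtain ⟨y, -, hy⟩ := Finset.exists_max_image Finset.univ (G.dist x) ⟨x, Finset.mem_univ x⟩
  have hdist : 1 < G.dist x y :=
    (hconn.one_lt_dist_of_ne_of_not_adj hxz hnadj).trans_le (hy z (Finset.mem_univ z))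
  have hyx : y ≠ x := by
    rintro rfl
    simp at hdist
  exact ⟨y, hyx, fun hadj ↦ hdist.ne' (dist_eq_one_iff_adj.2 hadj),
    hconn.induce_compl_singleton_of_forall_dist_le hyx fun v ↦ hy v (Finset.mem_univ v)⟩

/-- In a connected non-complete `r`-regular finite simple graph (`r ≥ 2`), for every
vertex `x` there is a vertex `y ≠ x` not adjacent to `x` whose deletion leaves the
graph connected. -/
theorem exists_nonadjacent_noncut {V : Type*} [Fintype V] (G : SimpleGraph V)
    (r : ℕ) (hr : 2 ≤ r) [DecidableRel G.Adj]
    (hconn : G.Connected) (hnc : G ≠ ⊤) (hreg : G.IsRegularOfDegree r) (x : V) :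
    ∃ y : V, y ≠ x ∧ ¬ G.Adj x y ∧ (G.induce {v : V | v ≠ y}).Connected :=
  exists_nonadjacent_noncut_general G r hconn hnc hreg x
end
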